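/- Dynamic regret for S-II (Optimistic Mirror Descent): Let E be a real normed vector space, φ: [0,∞) → [0,+∞] convex with φ(0) = 0, and ψ: E → ℝ ∪ {+∞} proper and φ-convex. Fix T ≥ 1, a ∈ E, a^ψ ∈ ∂ψ(a), positive reals θ_1,…,θ_T, and x̂_1*,…,x̂_T* ∈ E*. Suppose for t = 1,…,T+1 there are points x̃_t ∈ E and dual vectors x̌_t^ψ, x̃_t^ψ ∈ E* with x̌_1^ψ = x̃_1^ψ = a^ψ, x̌_t^ψ = x̃_{t−1}^ψ − θ_{t−1} x_{t−1}* for t ≥ 2, x̌_t^ψ ∈ ∂ψ(x̃_t) and x̃_t^ψ ∈ ∂ψ(x̃_t); moreover for t = 1,…,T there are x_t ∈ E with x̃_t^ψ − θ_t x̂_t* ∈ ∂ψ(x_t), and functions f_t: E → ℝ ∪ {+∞} with x_t* ∈ ∂f_t(x_t). Then for all z_1,…,z_T ∈ dom ψ with f_t(z_t) < +∞: Σ_{t=1}^T (f_t(x_t) − f_t(z_t)) ≤ Σ_{t=1}^T (1/θ_t)[B_ψ(z_t, x̃_t^ψ) − B_ψ(z_t, x̌_{t+1}^ψ)] + Σ_{t=1}^T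 (1/θ_t) φ*(θ_t‖x_t* − x̂_t*‖) − Σ_{t=1}^T (1/θ_t) B_ψ(x_t, x̃_t^ψ). -/

import Mathlib

open Finset

/-- Fenchel conjugate of an extended-real-valued function on a normed space. -/
noncomputable def fconj {E : Type*} [NormedAddCommGroup E] [NormedSpace ℝ E]
    (g : E → EReal) (p : E →L[ℝ] ℝ) : EReal :=
  ⨆ x : E, ((p x : ℝ) : EReal) - g x

/-- Generalized Bregman divergence `B_g(x, y*) = g(x) + g*(y*) − ⟨y*, x⟩`. -/
noncomputable def breg {E : Type*} [NormedAddCommGroup E] [NormedSpace ℝ E]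
    (g : E → EReal) (x : E) (p : E →L[ℝ] ℝ) : EReal :=
  g x + fconj g p - ((p x : ℝ) : EReal)

/-- Subdifferential: `∂g(x) = {x* : B_g(x, x*) = 0}`. -/
def subdiff {E : Type*} [NormedAddCommGroup E] [NormedSpace ℝ E]
    (g : E → EReal) (x : E) : Set (E →L[ℝ] ℝ) :=
  {p | breg g x p = 0}

/-- Conjugate of `Φ : [0,∞) → [0,+∞]` : `Φ*(s) = sup_{r ≥ 0} (s·r − Φ(r))`. -/
noncomputable def phiConj (Φ : ℝ → EReal) (s : ℝ) : EReal :=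
  ⨆ r : {r : ℝ // 0 ≤ r}, ((s * r.1 : ℝ) : EReal) - Φ r.1

/-! The bound holds round by round. Put `P = x̃_t^ψ ∈ ∂ψ(x̃_t)`, `R = P - θ x_t* ∈ ∂ψ(x̃_{t+1})`
and `Q = P - θ x̂_t* ∈ ∂ψ(x_t)`. At a subgradient `p ∈ ∂ψ(y)` the Bregman divergence is the
linearization gap `B(z, p) = ψ z - ψ y - ⟨p, z - y⟩`, which gives the three-point identity
  `B(z, P) - B(z, R) - B(x_t, P)`
  `  = B(x̃_{t+1}, Q) + θ⟨x_t* - x̂_t*, x̃_{t+1} - x_t⟩ + θ⟨x_t*, x_t - z⟩`.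
The last term dominates `θ (f_t(x_t) - f_t(z))` by the subgradient inequality, φ-convexity gives
`B(x̃_{t+1}, Q) ≥ φ(r)` for `r = ‖x̃_{t+1} - x_t‖`, the middle term is at least
`-θ‖x_t* - x̂_t*‖ r`, and `θ‖x_t* - x̂_t*‖ r - φ(r) ≤ φ*(θ‖x_t* - x̂_t*‖)`. -/

namespace EReal

lemma neg_add_neg_le_neg_add (x y : EReal) : -x + -y ≤ -(x + y) := by
  induction x <;> induction y <;> simp [← EReal.coe_add, ← EReal.coe_neg]

lemma sum_neg_le_neg_sum {ι : Type*} (s : Finset ι) (w : ι → EReal) :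
    ∑ i ∈ s, -w i ≤ -∑ i ∈ s, w i := by
  induction s using Finset.cons_induction with
  | empty => simp
  | cons a s ha ih =>
    rw [sum_cons, sum_cons]
    exact (add_le_add le_rfl ih).trans (neg_add_neg_le_neg_add _ _)

lemma sum_add_sub_le {ι : Type*} (s : Finset ι) (u v w : ι → EReal) :
    ∑ i ∈ s, (u i + v i - w i) ≤ ∑ i ∈ s, u i + ∑ i ∈ s, v i - ∑ i ∈ s, w i := by
  simp only [sub_eq_add_neg, sum_add_distrib]
  exact add_le_add le_rfl (sum_neg_le_neg_sum s w)

end EReal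

section Bregman

variable {E : Type*} [NormedAddCommGroup E] [NormedSpace ℝ E]

def IsPhiConvex (Φ : ℝ → EReal) (ψ : E → EReal) : Prop :=
  ∀ (x y : E) (p : E →L[ℝ] ℝ), p ∈ subdiff ψ y → Φ ‖x - y‖ ≤ breg ψ x p

lemma sub_le_fconj (g : E → EReal) (p : E →L[ℝ] ℝ) (x : E) :
    ((p x : ℝ) : EReal) - g x ≤ fconj g p :=
  le_iSup (fun x => ((p x : ℝ) : EReal) - g x) x

lemma exists_eq_coe_of_mem_subdiff {g : E → EReal} {y : E} {p : E →L[ℝ] ℝ}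
    (h : p ∈ subdiff g y) : ∃ b : ℝ, g y = b ∧ fconj g p = ((p y - b : ℝ) : EReal) := by
  simp only [subdiff, breg, Set.mem_ofPred_eq] at h
  generalize g y = u at h ⊢
  generalize fconj g p = v at h ⊢
  induction u <;> induction v <;> try simp at h
  exact ⟨_, rfl, by norm_cast at h ⊢; linarith⟩

lemma breg_eq_of_mem_subdiff {g : E → EReal} {y z : E} {p : E →L[ℝ] ℝ} {b c : ℝ}
    (h : p ∈ subdiff g y) (hy : g y = b) (hz : g z = c) :
    breg g z p = ((c - b - p (z - y) : ℝ) : EReal) := by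
  obtain ⟨b', hb', hconj⟩ := exists_eq_coe_of_mem_subdiff h
  obtain rfl : b' = b := by simpa [hy] using hb'.symm
  rw [breg, hz, hconj, map_sub]
  norm_cast
  ring

lemma sub_le_of_mem_subdiff {g : E → EReal} {x : E} {p : E →L[ℝ] ℝ} (h : p ∈ subdiff g x)
    (z : E) : g x - g z ≤ ((p (x - z) : ℝ) : EReal) := by
  obtain ⟨b, hb, hconj⟩ := exists_eq_coe_of_mem_subdiff h
  have hFY := sub_le_fconj g p z
  rw [hconj] at hFY
  rw [hb, map_sub]
  generalize g z = u at hFY ⊢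
  induction u with
  | bot =>
    exact absurd (top_le_iff.1 ((EReal.coe_sub_bot _).symm.trans_le hFY)) (EReal.coe_ne_top _)
  | top => simp
  | coe c => norm_cast at hFY ⊢; linarith

lemma coe_sub_le_phiConj {Φ : ℝ → EReal} {r b : ℝ} (hr : 0 ≤ r) (h : Φ r ≤ b) (s : ℝ) :
    ((s * r - b : ℝ) : EReal) ≤ phiConj Φ s :=
  le_iSup_of_le (⟨r, hr⟩ : {r : ℝ // 0 ≤ r}) <| by
    rw [EReal.coe_sub]; exact EReal.sub_le_sub le_rfl h

lemma optimistic_step_le {Φ : ℝ → EReal} {ψ f : E → EReal} (hψ : IsPhiConvex Φ ψ) {θ : ℝ}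
    (hθ : 0 < θ) {P xs xh : E →L[ℝ] ℝ} {x y y' z : E} (hP : P ∈ subdiff ψ y)
    (hR : P - θ • xs ∈ subdiff ψ y') (hQ : P - θ • xh ∈ subdiff ψ x) (hf : xs ∈ subdiff f x)
    (hz : ψ z ≠ ⊤) (hz' : ψ z ≠ ⊥) :
    f x - f z ≤ ((1 / θ : ℝ) : EReal) * (breg ψ z P - breg ψ z (P - θ • xs))
      + ((1 / θ : ℝ) : EReal) * phiConj Φ (θ * ‖xs - xh‖)
      - ((1 / θ : ℝ) : EReal) * breg ψ x P := by
  obtain ⟨a, ha, -⟩ := exists_eq_coe_of_mem_subdiff hP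
  obtain ⟨a', ha', -⟩ := exists_eq_coe_of_mem_subdiff hR
  obtain ⟨b, hb, -⟩ := exists_eq_coe_of_mem_subdiff hQ
  obtain ⟨c, hc⟩ : ∃ c : ℝ, ψ z = c := ⟨(ψ z).toReal, (EReal.coe_toReal hz hz').symm⟩
  have hconj := coe_sub_le_phiConj (norm_nonneg (y' - x))
    ((hψ y' x _ hQ).trans_eq (breg_eq_of_mem_subdiff hQ hb ha')) (θ * ‖xs - xh‖)
  have hdual : -(‖xs - xh‖ * ‖y' - x‖) ≤ (xs - xh) (y' - x) :=
    neg_le_of_abs_le ((xs - xh).le_opNorm (y' - x))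
  rw [breg_eq_of_mem_subdiff hP ha hc, breg_eq_of_mem_subdiff hR ha' hc,
    breg_eq_of_mem_subdiff hP ha hb]
  calc f x - f z ≤ ((xs (x - z) : ℝ) : EReal) := sub_le_of_mem_subdiff hf z
    _ ≤ (((1 / θ) * ((c - a - P (z - y)) - (c - a' - (P - θ • xs) (z - y')))
          + (1 / θ) * (θ * ‖xs - xh‖ * ‖y' - x‖ - (a' - b - (P - θ • xh) (y' - x)))
          - (1 / θ) * (b - a - P (x - y)) : ℝ) : EReal) := by
      rw [EReal.coe_le_coe_iff]
      simp only [map_sub, sub_apply, smul_apply, smul_eq_mul] at hdual ⊢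
      field_simp
      linarith [mul_le_mul_of_nonneg_left hdual hθ.le]
    _ ≤ _ := by
      push_cast
      exact EReal.sub_le_sub (add_le_add le_rfl
        (mul_le_mul_of_nonneg_left hconj (by exact_mod_cast (one_div_pos.2 hθ).le))) le_rfl

end Bregman

theorem dynamic_regret_S_II_general
    {E : Type*} [NormedAddCommGroup E] [NormedSpace ℝ E]
    (Φ : ℝ → EReal)
    (ψ : E → EReal) (hbot : ∀ x, ψ x ≠ ⊥)
    (hψ : ∀ (x y : E) (p : E →L[ℝ] ℝ), p ∈ subdiff ψ y → Φ ‖x - y‖ ≤ breg ψ x p)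
    (T : ℕ)
    (θ : ℕ → ℝ) (hθ : ∀ t ∈ Icc 1 T, 0 < θ t)
    (xhat xstar : ℕ → E →L[ℝ] ℝ)
    (xtil : ℕ → E) (xcheck xtilpsi : ℕ → E →L[ℝ] ℝ)
    (hxcheck : ∀ t ∈ Icc 2 (T + 1), xcheck t = xtilpsi (t - 1) - θ (t - 1) • xstar (t - 1))
    (hxtil : ∀ t ∈ Icc 1 (T + 1),
      xcheck t ∈ subdiff ψ (xtil t) ∧ xtilpsi t ∈ subdiff ψ (xtil t))
    (xt : ℕ → E)
    (hxt : ∀ t ∈ Icc 1 T, xtilpsi t - θ t • xhat t ∈ subdiff ψ (xt t))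
    (f : ℕ → E → EReal)
    (hf : ∀ t ∈ Icc 1 T, xstar t ∈ subdiff (f t) (xt t))
    (z : ℕ → E)
    (hz : ∀ t ∈ Icc 1 T, ψ (z t) < ⊤ ∧ f t (z t) < ⊤) :
    ∑ t ∈ Icc 1 T, (f t (xt t) - f t (z t)) ≤
      (∑ t ∈ Icc 1 T, ((1 / θ t : ℝ) : EReal) *
          (breg ψ (z t) (xtilpsi t) - breg ψ (z t) (xcheck (t + 1))))
      + (∑ t ∈ Icc 1 T, ((1 / θ t : ℝ) : EReal) *
          phiConj Φ (θ t * ‖xstar t - xhat t‖))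
      - ∑ t ∈ Icc 1 T, ((1 / θ t : ℝ) : EReal) * breg ψ (xt t) (xtilpsi t) := by
  refine (sum_le_sum fun t ht => ?_).trans (EReal.sum_add_sub_le _ _ _ _)
  obtain ⟨ht1, htT⟩ := mem_Icc.1 ht
  have hcheck : xcheck (t + 1) = xtilpsi t - θ t • xstar t := by
    simpa using hxcheck (t + 1) (mem_Icc.2 ⟨by omega, by omega⟩)
  have hnext := (hxtil (t + 1) (mem_Icc.2 ⟨by omega, by omega⟩)).1
  rw [hcheck] at hnext ⊢
  exact optimistic_step_le hψ (hθ t ht) (hxtil t (mem_Icc.2 ⟨ht1, by omega⟩)).2 hnext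
    (hxt t ht) (hf t ht) (hz t ht).1.ne (hbot (z t))

/-- **Dynamic regret for the strategy S-II (Optimistic Mirror Descent).** -/
theorem dynamic_regret_S_II
    {E : Type*} [NormedAddCommGroup E] [NormedSpace ℝ E]
    (Φ : ℝ → EReal)
    (hΦconv : ∀ a b s t : ℝ, 0 ≤ a → 0 ≤ b → a + b = 1 → 0 ≤ s → 0 ≤ t →
      Φ (a * s + b * t) ≤ (a : EReal) * Φ s + (b : EReal) * Φ t)
    (hΦ0 : Φ 0 = 0) (hΦnn : ∀ s : ℝ, 0 ≤ s → 0 ≤ Φ s)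
    (ψ : E → EReal) (hbot : ∀ x, ψ x ≠ ⊥) (hproper : ∃ x, ψ x ≠ ⊤)
    (hψ : ∀ (x y : E) (p : E →L[ℝ] ℝ), p ∈ subdiff ψ y → Φ ‖x - y‖ ≤ breg ψ x p)
    (T : ℕ) (hT : 1 ≤ T)
    (a : E) (apsi : E →L[ℝ] ℝ) (ha : apsi ∈ subdiff ψ a)
    (θ : ℕ → ℝ) (hθ : ∀ t ∈ Icc 1 T, 0 < θ t)
    (xhat xstar : ℕ → E →L[ℝ] ℝ)
    (xtil : ℕ → E) (xcheck xtilpsi : ℕ → E →L[ℝ] ℝ)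
    (hinit : xcheck 1 = apsi ∧ xtilpsi 1 = apsi)
    (hxcheck : ∀ t ∈ Icc 2 (T + 1), xcheck t = xtilpsi (t - 1) - θ (t - 1) • xstar (t - 1))
    (hxtil : ∀ t ∈ Icc 1 (T + 1),
      xcheck t ∈ subdiff ψ (xtil t) ∧ xtilpsi t ∈ subdiff ψ (xtil t))
    (xt : ℕ → E)
    (hxt : ∀ t ∈ Icc 1 T, xtilpsi t - θ t • xhat t ∈ subdiff ψ (xt t))
    (f : ℕ → E → EReal)
    (hf : ∀ t ∈ Icc 1 T, xstar t ∈ subdiff (f t) (xt t))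
    (z : ℕ → E)
    (hz : ∀ t ∈ Icc 1 T, ψ (z t) < ⊤ ∧ f t (z t) < ⊤) :
    ∑ t ∈ Icc 1 T, (f t (xt t) - f t (z t)) ≤
      (∑ t ∈ Icc 1 T, ((1 / θ t : ℝ) : EReal) *
          (breg ψ (z t) (xtilpsi t) - breg ψ (z t) (xcheck (t + 1))))
      + (∑ t ∈ Icc 1 T, ((1 / θ t : ℝ) : EReal) *
          phiConj Φ (θ t * ‖xstar t - xhat t‖))
      - ∑ t ∈ Icc 1 T, ((1 / θ t : ℝ) : EReal) * breg ψ (xt t) (xtilpsi t) :=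
  dynamic_regret_S_II_general Φ ψ hbot hψ T θ hθ xhat xstar xtil xcheck xtilpsi hxcheck hxtil xt hxt
    f hf z hz
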